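/- arXiv:2512.00452 — 2 statements merged into one kernel-verified Lean document; each statement's English description precedes it below -/
import Mathlib

section
/- Let (a_n)_{n≥0} be a strictly increasing sequence of non-negative integers such that a_{n+1} − a_n → ∞ as n → ∞. Let γ₁ = Σ_{i=0}^∞ 2^{a_{2i}} ∈ ℤ₂ and γ₂ = Σ_{i=0}^∞ 2^{a_{2i+1}} ∈ ℤ₂. Then: (1) C(γ₁,m)·C(γ₂,m) → 0 in ℤ₂ as m → ∞ (i.e. v₂(C(γ₁,m)·C(γ₂,m)) → ∞); and (2) for every j ≥ 0, taking m = 2^{a_j}, one has v₂(C(γ₁,2^{a_j})·C(γ₂,2^{a_j})) = a_{j+1} − a_j. -/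
/-!
Since `ℤ₂` is a binomial ring, `γ ↦ C(γ, m)` is continuous on `ℤ₂`, so `‖C(γ, m)‖` is the eventual
value of `‖C(n, m)‖` along the truncations `n` of the digit expansion of `γ`. Those are computed by
Kummer's theorem: `v₂ C(n, m)` counts the positions `i` with `n mod 2^i < m mod 2^i`.

For `m = 2^{a_j}` one of `γ₁, γ₂` has the digit `a_j`, so there is no borrow, while the other has
no digit in `[a_j, a_{j+1})` and borrows exactly at `a_j + 1, …, a_{j+1}`. For general `m`, let
`a_i ≤ log₂ m < a_{i+1}`. If `a_i = log₂ m`, the factor carrying `a_{i+1}` has all its lower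
digits below `log₂ m` and borrows at least `a_{i+1} - a_i` times; otherwise the factor carrying
`a_{i+2}` does, at least `a_{i+2} - a_{i+1}` times. Both gaps tend to infinity.
-/

open Finset Filter Topology

/-- The generalized binomial coefficient `C(γ, m) = γ(γ-1)⋯(γ-m+1)/m!` for `γ ∈ ℚ_p`. -/
noncomputable def pChoose (p : ℕ) [Fact p.Prime] (γ : ℚ_[p]) (m : ℕ) : ℚ_[p] :=
  (descPochhammer ℚ_[p] m).eval γ / (m.factorial : ℚ_[p])

theorem Nat.mod_le_mod_of_dvd {n b c : ℕ} (h : c ∣ b) : n % c ≤ n % b := by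
  rw [← Nat.mod_mod_of_dvd n h]
  exact Nat.mod_le _ _

theorem Nat.le_mod_add_sub_mod_iff {n k q : ℕ} (hq : 0 < q) (hkn : k ≤ n) :
    q ≤ k % q + (n - k) % q ↔ n % q < k % q := by
  have h := Nat.add_mod_add_ite k (n - k) q
  rw [Nat.add_sub_cancel' hkn] at h
  have := Nat.mod_lt k hq
  have := Nat.mod_lt (n - k) hq
  split_ifs at h <;> omega

theorem StrictMono.exists_apply_le_lt_apply_succ {a : ℕ → ℕ} (ha : StrictMono a) {x : ℕ}
    (hx : a 0 ≤ x) : ∃ i, a i ≤ x ∧ x < a (i + 1) := by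
  have h : ∃ j, x < a j := ⟨x + 1, x.lt_succ_self.trans_le ha.le_apply⟩
  obtain ⟨i, hi⟩ : ∃ i, Nat.find h = i + 1 :=
    Nat.exists_eq_succ_of_ne_zero fun h0 => by have := Nat.find_spec h; rw [h0] at this; omega
  exact ⟨i, not_lt.1 (Nat.find_min h (by omega)), hi ▸ Nat.find_spec h⟩

section Digits

variable {p : ℕ} {b : ℕ → ℕ}

theorem sum_range_pow_lt_pow (hp : 1 < p) (hb : StrictMono b) {s k : ℕ} (h : ∀ i < s, b i < k) :
    ∑ i ∈ range s, p ^ b i < p ^ k := by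
  induction s generalizing k with
  | zero => simpa using pow_pos (by omega) k
  | succ s ih =>
    rw [sum_range_succ]
    calc _ < p ^ b s + p ^ b s := by have := ih fun i hi => hb hi; omega
      _ ≤ p ^ (b s + 1) := by rw [pow_succ, ← mul_two]; exact Nat.mul_le_mul_left _ hp
      _ ≤ p ^ k := Nat.pow_le_pow_right (by omega) (h s s.lt_succ_self)

theorem sum_range_pow_mod_pow (hp : 1 < p) (hb : StrictMono b) {s L k : ℕ} (hsL : s ≤ L)
    (h : ∀ i < s, b i < k) (hk : k ≤ b s) :
    (∑ i ∈ range L, p ^ b i) % p ^ k = ∑ i ∈ range s, p ^ b i := by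
  have hdvd : p ^ k ∣ ∑ i ∈ Ico s L, p ^ b i :=
    dvd_sum fun i hi => pow_dvd_pow p (hk.trans (hb.monotone (mem_Ico.1 hi).1))
  rw [← sum_range_add_sum_Ico _ hsL, Nat.add_mod, Nat.mod_eq_zero_of_dvd hdvd, add_zero,
    Nat.mod_mod, Nat.mod_eq_of_lt (sum_range_pow_lt_pow hp hb h)]

end Digits

section Kummer

variable {p : ℕ} [hp : Fact p.Prime]

theorem padicValNat_choose_eq_card_mod_lt {n k b : ℕ} (hkn : k ≤ n) (hnb : Nat.log p n < b) :
    padicValNat p (n.choose k) = #{i ∈ Ico 1 b | n % p ^ i < k % p ^ i} := by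
  rw [padicValNat_choose hkn hnb]
  exact congrArg card
    (filter_congr fun i _ => Nat.le_mod_add_sub_mod_iff (pow_pos hp.out.pos i) hkn)

theorem le_padicValNat_choose_of_mod_lt {n m t u : ℕ} (hmn : m ≤ n) (hm : m < p ^ (t + 1))
    (hn : n % p ^ u < m) : u - t ≤ padicValNat p (n.choose m) := by
  have hpu : p ^ u ≤ n := by
    by_contra! h
    rw [Nat.mod_eq_of_lt h] at hn
    omega
  have hu : u ≤ Nat.log p n := Nat.le_log_of_pow_le hp.out.one_lt hpu
  rw [padicValNat_choose_eq_card_mod_lt hmn (Nat.lt_succ_self _)]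
  calc u - t = #(Ico (t + 1) (u + 1)) := by simp
    _ ≤ _ := card_le_card fun i hi => by
      rw [mem_Ico] at hi
      rw [mem_filter, mem_Ico,
        Nat.mod_eq_of_lt (hm.trans_le (Nat.pow_le_pow_right hp.out.pos hi.1))]
      exact ⟨⟨by omega, by omega⟩,
        (Nat.mod_le_mod_of_dvd (pow_dvd_pow p (by omega : i ≤ u))).trans_lt hn⟩

theorem padicValNat_choose_pow_eq_of_mod {n A A' : ℕ} (hA : A ≤ A') (hlow : n % p ^ A' < p ^ A)
    (hbit : p ^ A' ≤ n % p ^ (A' + 1)) : padicValNat p (n.choose (p ^ A)) = A' - A := by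
  have hpn : p ^ A' ≤ n := hbit.trans (Nat.mod_le _ _)
  have hA' : A' ≤ Nat.log p n := Nat.le_log_of_pow_le hp.out.one_lt hpn
  have hpA : p ^ A ≤ p ^ A' := Nat.pow_le_pow_right hp.out.pos hA
  rw [padicValNat_choose_eq_card_mod_lt (hpA.trans hpn) (Nat.lt_succ_self _)]
  suffices {i ∈ Ico 1 (Nat.log p n + 1) | n % p ^ i < p ^ A % p ^ i} = Ico (A + 1) (A' + 1) by
    simp [this]
  ext i
  simp only [mem_filter, mem_Ico]
  rcases le_or_gt i A with hiA | hAi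
  · rw [Nat.mod_eq_zero_of_dvd (pow_dvd_pow p hiA)]
    simp only [Nat.not_lt_zero, and_false, false_iff]
    omega
  rw [Nat.mod_eq_of_lt (Nat.pow_lt_pow_right hp.out.one_lt hAi)]
  rcases le_or_gt i A' with hiA' | hA'i
  · have := (Nat.mod_le_mod_of_dvd (n := n) (pow_dvd_pow p hiA')).trans_lt hlow
    omega
  · have := hbit.trans (Nat.mod_le_mod_of_dvd (n := n) (pow_dvd_pow p (hA'i : A' + 1 ≤ i)))
    omega

end Kummer

section Padic

variable {p : ℕ} [hp : Fact p.Prime]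

theorem pChoose_coe (γ : ℤ_[p]) (m : ℕ) :
    pChoose p γ m = ((Ring.choose γ m : ℤ_[p]) : ℚ_[p]) := by
  have h : (descPochhammer ℚ_[p] m).eval (γ : ℚ_[p]) =
      ((m.factorial • Ring.choose γ m : ℤ_[p]) : ℚ_[p]) := by
    rw [← Ring.descPochhammer_eq_factorial_smul_choose, ← Polynomial.aeval_eq_smeval,
      ← descPochhammer_map (algebraMap ℤ ℚ_[p]), Polynomial.eval_map_algebraMap]
    exact Polynomial.aeval_algHom_apply (PadicInt.Coe.ringHom (p := p)).toIntAlgHom _ _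
  rw [pChoose, h, nsmul_eq_mul, PadicInt.coe_mul, PadicInt.coe_natCast,
    mul_div_cancel_left₀ _ (by exact_mod_cast m.factorial_ne_zero)]

namespace PadicInt

theorem norm_natCast_eq_zpow_neg_padicValNat {k : ℕ} (hk : k ≠ 0) :
    ‖(k : ℤ_[p])‖ = p ^ (-(padicValNat p k : ℤ)) := by
  rw [norm_def, coe_natCast, Padic.norm_eq_zpow_neg_valuation (by exact_mod_cast hk),
    Padic.valuation_natCast]

theorem valuation_eq_of_norm_eq {x : ℤ_[p]} {n : ℕ} (h : ‖x‖ = p ^ (-(n : ℤ))) :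
    x ≠ 0 ∧ x.valuation = n := by
  have hx : x ≠ 0 := norm_pos_iff.1 (h ▸ zpow_pos (by exact_mod_cast hp.out.pos) _)
  rw [norm_eq_zpow_neg_valuation hx] at h
  exact ⟨hx, by exact_mod_cast neg_injective (zpow_right_injective₀
    (by exact_mod_cast hp.out.pos) (by exact_mod_cast hp.out.ne_one) h)⟩

theorem summable_pow_comp {ι : Type*} {b : ι → ℕ} (hb : Tendsto b cofinite atTop) :
    Summable fun i => (p : ℤ_[p]) ^ b i :=
  NonarchimedeanAddGroup.summable_of_tendsto_cofinite_zero
    ((tendsto_pow_atTop_nhds_zero_of_norm_lt_one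
      (by rw [norm_p]; exact inv_lt_one_of_one_lt₀ (by exact_mod_cast hp.out.one_lt))).comp hb)

theorem tendsto_norm_choose_natCast {u : ℕ → ℕ} {γ : ℤ_[p]}
    (hu : Tendsto (fun L => (u L : ℤ_[p])) atTop (𝓝 γ)) (m : ℕ) :
    Tendsto (fun L => ‖((u L).choose m : ℤ_[p])‖) atTop (𝓝 ‖Ring.choose γ m‖) := by
  simpa [Ring.choose_natCast] using (((continuous_choose m).tendsto γ).comp hu).norm

section Digits

variable {b : ℕ → ℕ} {γ : ℤ_[p]}

theorem tendsto_sum_range_pow (hγ : HasSum (fun i => (p : ℤ_[p]) ^ b i) γ) :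
    Tendsto (fun L => ((∑ i ∈ range L, p ^ b i : ℕ) : ℤ_[p])) atTop (𝓝 γ) := by
  simpa using hγ.tendsto_sum_nat

theorem norm_choose_le_of_digits (hb : StrictMono b)
    (hγ : HasSum (fun i => (p : ℤ_[p]) ^ b i) γ) {m s : ℕ} (hm : m ≠ 0)
    (hprev : ∀ i < s, b i < Nat.log p m) (hs : Nat.log p m < b s) :
    ‖Ring.choose γ m‖ ≤ p ^ (-((b s - Nat.log p m : ℕ) : ℤ)) := by
  refine le_of_tendsto (tendsto_norm_choose_natCast (tendsto_sum_range_pow hγ) m) ?_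
  filter_upwards [eventually_gt_atTop s] with L hL
  have hp1 := hp.out.one_lt
  have hmod : (∑ i ∈ range L, p ^ b i) % p ^ b s < m := by
    rw [sum_range_pow_mod_pow hp1 hb hL.le (fun i hi => (hprev i hi).trans hs) le_rfl]
    exact (sum_range_pow_lt_pow hp1 hb hprev).trans_le (Nat.pow_log_le_self p hm)
  have hmn : m ≤ ∑ i ∈ range L, p ^ b i :=
    calc m ≤ p ^ b s :=
          (Nat.lt_pow_succ_log_self hp1 m).le.trans (Nat.pow_le_pow_right hp.out.pos hs)
      _ ≤ _ := single_le_sum (f := fun i => p ^ b i) (fun _ _ => Nat.zero_le _) (mem_range.2 hL)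
  have hv := le_padicValNat_choose_of_mod_lt hmn (Nat.lt_pow_succ_log_self hp1 m) hmod
  rw [norm_natCast_eq_zpow_neg_padicValNat (Nat.choose_pos hmn).ne']
  exact zpow_le_zpow_right₀ (by exact_mod_cast hp1.le) (by omega)

theorem norm_choose_pow_of_digits (hb : StrictMono b)
    (hγ : HasSum (fun i => (p : ℤ_[p]) ^ b i) γ) {A s : ℕ} (hA : A ≤ b s)
    (hprev : ∀ i < s, b i < A) :
    ‖Ring.choose γ (p ^ A)‖ = p ^ (-((b s - A : ℕ) : ℤ)) := by
  refine tendsto_nhds_unique (tendsto_norm_choose_natCast (tendsto_sum_range_pow hγ) _)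
    (tendsto_const_nhds.congr' ?_)
  filter_upwards [eventually_gt_atTop (s + 1)] with L hL
  have hp1 := hp.out.one_lt
  have hlow : (∑ i ∈ range L, p ^ b i) % p ^ b s < p ^ A := by
    rw [sum_range_pow_mod_pow hp1 hb (by omega) (fun i hi => (hprev i hi).trans_le hA) le_rfl]
    exact sum_range_pow_lt_pow hp1 hb hprev
  have hbit : p ^ b s ≤ (∑ i ∈ range L, p ^ b i) % p ^ (b s + 1) := by
    rw [sum_range_pow_mod_pow hp1 hb hL.le
      (fun i hi => Nat.lt_succ_of_le (hb.monotone (by omega))) (hb s.lt_succ_self),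
      sum_range_succ]
    exact Nat.le_add_left _ _
  have hne : (∑ i ∈ range L, p ^ b i).choose (p ^ A) ≠ 0 :=
    (Nat.choose_pos ((Nat.pow_le_pow_right hp.out.pos hA).trans
      (hbit.trans (Nat.mod_le _ _)))).ne'
  rw [norm_natCast_eq_zpow_neg_padicValNat hne, padicValNat_choose_pow_eq_of_mod hA hlow hbit]

end Digits

section Interleaved

variable {a : ℕ → ℕ} {γ γ₁ γ₂ : ℤ_[p]}

theorem norm_choose_le_of_interleaved (ha : StrictMono a) (r : ℕ)
    (hγ : HasSum (fun i => (p : ℤ_[p]) ^ a (2 * i + r)) γ) {m s k : ℕ} (hk : 2 * s + r = k)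
    (hm : m ≠ 0) (hprev : ∀ i, i + 2 ≤ k → a i < Nat.log p m) (hlog : Nat.log p m < a k) :
    ‖Ring.choose γ m‖ ≤ p ^ (-((a k - Nat.log p m : ℕ) : ℤ)) := by
  subst hk
  exact norm_choose_le_of_digits (fun i j h => ha (by omega)) hγ hm
    (fun i hi => hprev _ (by omega)) hlog

theorem norm_choose_pow_of_interleaved (ha : StrictMono a) (r : ℕ)
    (hγ : HasSum (fun i => (p : ℤ_[p]) ^ a (2 * i + r)) γ) {j s k : ℕ} (hk : 2 * s + r = k)
    (hjk : j ≤ k) (hkj : k ≤ j + 1) :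
    ‖Ring.choose γ (p ^ a j)‖ = p ^ (-((a k - a j : ℕ) : ℤ)) := by
  subst hk
  exact norm_choose_pow_of_digits (fun i j h => ha (by omega)) hγ (ha.monotone hjk)
    (fun i hi => ha (by omega))

theorem norm_choose_mul_choose_pow (ha : StrictMono a)
    (h₁ : HasSum (fun i => (p : ℤ_[p]) ^ a (2 * i)) γ₁)
    (h₂ : HasSum (fun i => (p : ℤ_[p]) ^ a (2 * i + 1)) γ₂) (j : ℕ) :
    ‖Ring.choose γ₁ (p ^ a j) * Ring.choose γ₂ (p ^ a j)‖ =
      p ^ (-((a (j + 1) - a j : ℕ) : ℤ)) := by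
  rw [norm_mul]
  obtain ⟨s, rfl | rfl⟩ := Nat.even_or_odd' j
  · rw [norm_choose_pow_of_interleaved ha 0 h₁ (j := 2 * s) (s := s) rfl le_rfl (by omega),
      norm_choose_pow_of_interleaved ha 1 h₂ (j := 2 * s) (s := s) rfl (by omega) le_rfl]
    simp
  · rw [norm_choose_pow_of_interleaved ha 0 h₁ (j := 2 * s + 1) (s := s + 1)
        (k := 2 * s + 1 + 1) (by ring) (by omega) le_rfl,
      norm_choose_pow_of_interleaved ha 1 h₂ (j := 2 * s + 1) (s := s) rfl le_rfl (by omega)]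
    simp

theorem norm_choose_mul_choose_le (ha : StrictMono a)
    (h₁ : HasSum (fun i => (p : ℤ_[p]) ^ a (2 * i)) γ₁)
    (h₂ : HasSum (fun i => (p : ℤ_[p]) ^ a (2 * i + 1)) γ₂) {m k : ℕ} (hm : m ≠ 0)
    (hprev : ∀ i, i + 2 ≤ k → a i < Nat.log p m) (hlog : Nat.log p m < a k) :
    ‖Ring.choose γ₁ m * Ring.choose γ₂ m‖ ≤ p ^ (-((a k - Nat.log p m : ℕ) : ℤ)) := by
  rw [norm_mul]
  obtain ⟨s, rfl | rfl⟩ := Nat.even_or_odd' k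
  · exact (mul_le_of_le_one_right (norm_nonneg _) (norm_le_one _)).trans
      (norm_choose_le_of_interleaved ha 0 h₁ rfl hm hprev hlog)
  · exact (mul_le_of_le_one_left (norm_nonneg _) (norm_le_one _)).trans
      (norm_choose_le_of_interleaved ha 1 h₂ rfl hm hprev hlog)

theorem norm_choose_mul_choose_le_of_log_mem (ha : StrictMono a)
    (h₁ : HasSum (fun i => (p : ℤ_[p]) ^ a (2 * i)) γ₁)
    (h₂ : HasSum (fun i => (p : ℤ_[p]) ^ a (2 * i + 1)) γ₂) {m i B : ℕ} (hm : m ≠ 0)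
    (hi : a i ≤ Nat.log p m) (hi' : Nat.log p m < a (i + 1)) (hB : B ≤ a (i + 1) - a i)
    (hB' : B ≤ a (i + 2) - a (i + 1)) :
    ‖Ring.choose γ₁ m * Ring.choose γ₂ m‖ ≤ p ^ (-(B : ℤ)) := by
  have hp1 : (1 : ℝ) ≤ p := by exact_mod_cast hp.out.one_lt.le
  rcases hi.eq_or_lt with heq | hlt
  · exact (norm_choose_mul_choose_le ha h₁ h₂ (k := i + 1) hm
      (fun l hl => heq ▸ ha (by omega)) hi').trans (zpow_le_zpow_right₀ hp1 (by omega))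
  · exact (norm_choose_mul_choose_le ha h₁ h₂ (k := i + 2) hm
      (fun l hl => (ha.monotone (by omega : l ≤ i)).trans_lt hlt)
      (hi'.trans (ha (by omega)))).trans (zpow_le_zpow_right₀ hp1 (by omega))

theorem tendsto_choose_mul_choose (ha : StrictMono a)
    (h₁ : HasSum (fun i => (p : ℤ_[p]) ^ a (2 * i)) γ₁)
    (h₂ : HasSum (fun i => (p : ℤ_[p]) ^ a (2 * i + 1)) γ₂)
    (hgap : Tendsto (fun n => a (n + 1) - a n) atTop atTop) :
    Tendsto (fun m => Ring.choose γ₁ m * Ring.choose γ₂ m) atTop (𝓝 0) := by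
  rw [NormedAddGroup.tendsto_nhds_zero]
  intro ε hε
  obtain ⟨B, hB⟩ := exists_pow_lt_of_lt_one hε
    (inv_lt_one_of_one_lt₀ (by exact_mod_cast hp.out.one_lt : (1 : ℝ) < p))
  obtain ⟨K, hK⟩ := eventually_atTop.1 (tendsto_atTop.1 hgap B)
  filter_upwards [eventually_ge_atTop (p ^ a K)] with m hm
  have hm0 : m ≠ 0 := ((pow_pos hp.out.pos _).trans_le hm).ne'
  have hlog : a K ≤ Nat.log p m := Nat.le_log_of_pow_le hp.out.one_lt hm
  obtain ⟨i, hi, hi'⟩ := ha.exists_apply_le_lt_apply_succ ((ha.monotone K.zero_le).trans hlog)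
  have hKi : K ≤ i := Nat.lt_succ_iff.1 (ha.lt_iff_lt.1 (hlog.trans_lt hi'))
  calc _ ≤ (p : ℝ) ^ (-(B : ℤ)) := norm_choose_mul_choose_le_of_log_mem ha h₁ h₂ hm0 hi hi'
        (hK i hKi) (hK (i + 1) (by omega))
    _ = (p : ℝ)⁻¹ ^ B := by rw [zpow_neg, zpow_natCast, inv_pow]
    _ < ε := hB

end Interleaved

end PadicInt

end Padic

/-- For `(a_n)` strictly increasing with gaps tending to infinity, and the 2-adic integers
`γ₁ = Σ 2^{a_{2i}}`, `γ₂ = Σ 2^{a_{2i+1}}`, the products `C(γ₁,m)C(γ₂,m)` tend to `0`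
2-adically, and `v₂(C(γ₁,2^{a_j})·C(γ₂,2^{a_j})) = a_{j+1} - a_j` for every `j`. -/
theorem stmt_6 (a : ℕ → ℕ) (ha : StrictMono a)
    (hgap : Filter.Tendsto (fun n => a (n + 1) - a n) Filter.atTop Filter.atTop)
    (γ₁ γ₂ : ℤ_[2])
    (hγ₁ : γ₁ = ∑' i : ℕ, (2 : ℤ_[2]) ^ (a (2 * i)))
    (hγ₂ : γ₂ = ∑' i : ℕ, (2 : ℤ_[2]) ^ (a (2 * i + 1))) :
    Filter.Tendsto (fun m => pChoose 2 (γ₁ : ℚ_[2]) m * pChoose 2 (γ₂ : ℚ_[2]) m)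
      Filter.atTop (nhds 0) ∧
    ∀ j : ℕ, pChoose 2 (γ₁ : ℚ_[2]) (2 ^ a j) * pChoose 2 (γ₂ : ℚ_[2]) (2 ^ a j) ≠ 0 ∧
      (pChoose 2 (γ₁ : ℚ_[2]) (2 ^ a j) * pChoose 2 (γ₂ : ℚ_[2]) (2 ^ a j)).valuation
        = (a (j + 1) : ℤ) - (a j : ℤ) := by
  have hsum (r : ℕ) : HasSum (fun i => ((2 : ℕ) : ℤ_[2]) ^ a (2 * i + r))
      (∑' i : ℕ, (2 : ℤ_[2]) ^ (a (2 * i + r))) := by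
    have hr : StrictMono fun i => a (2 * i + r) := fun i j h => ha (by omega)
    exact_mod_cast (PadicInt.summable_pow_comp
      (by rw [Nat.cofinite_eq_atTop]; exact hr.tendsto_atTop)).hasSum
  have h₁ : HasSum (fun i => ((2 : ℕ) : ℤ_[2]) ^ a (2 * i)) γ₁ := hγ₁ ▸ hsum 0
  have h₂ := hγ₂ ▸ hsum 1
  have hprod (m : ℕ) : pChoose 2 γ₁ m * pChoose 2 γ₂ m =
      ((Ring.choose γ₁ m * Ring.choose γ₂ m : ℤ_[2]) : ℚ_[2]) := by
    rw [pChoose_coe, pChoose_coe, PadicInt.coe_mul]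
  simp only [hprod]
  refine ⟨?_, fun j => ?_⟩
  · have hcoe : Continuous fun x : ℤ_[2] => (x : ℚ_[2]) := by fun_prop
    exact (hcoe.tendsto 0).comp (PadicInt.tendsto_choose_mul_choose ha h₁ h₂ hgap)
  · obtain ⟨hne, hval⟩ :=
      PadicInt.valuation_eq_of_norm_eq (PadicInt.norm_choose_mul_choose_pow ha h₁ h₂ j)
    have := ha (Nat.lt_add_one j)
    refine ⟨PadicInt.coe_ne_zero.2 hne, ?_⟩
    rw [PadicInt.valuation_coe, hval]
    omega
end

section
/- For every positive real number β there exist 2-adic integers γ₁, γ₂ ∈ ℤ₂ such that C(γ₁,m)·C(γ₂,m) ≠ 0 for all m ≥ 0 and the lim inf as m → ∞ of v₂(C(γ₁,m)·C(γ₂,m))/m equals β. (Consequently the series Σ_m C(γ₁,m)C(γ₂,m)x^m over ℚ₂ has radius of convergence exactly 2^β.) -/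
open Filter Finset

section BinarySum

def binarySum (e : ℕ → ℕ) (K : ℕ) : ℕ := ∑ k ∈ range K, 2 ^ e k

variable {e : ℕ → ℕ}

lemma binarySum_succ (e : ℕ → ℕ) (K : ℕ) : binarySum e (K + 1) = binarySum e K + 2 ^ e K :=
  sum_range_succ _ _

lemma two_pow_le_binarySum {K k : ℕ} (hk : k < K) : 2 ^ e k ≤ binarySum e K :=
  single_le_sum (f := fun k ↦ 2 ^ e k) (fun _ _ ↦ Nat.zero_le _) (mem_range.2 hk)

lemma sum_two_pow_lt {s : Finset ℕ} {j : ℕ} (he : Set.InjOn e s) (h : ∀ k ∈ s, e k < j) :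
    ∑ k ∈ s, 2 ^ e k < 2 ^ j := by
  rw [← sum_image he]
  exact Nat.geomSum_lt le_rfl (by simpa using h)

lemma binarySum_lt_two_pow (he : e.Injective) {K j : ℕ} (h : ∀ k < K, e k < j) :
    binarySum e K < 2 ^ j :=
  sum_two_pow_lt he.injOn (fun k hk ↦ h k (mem_range.1 hk))

lemma binarySum_mod_two_pow (he : e.Injective) (K j : ℕ) :
    binarySum e K % 2 ^ j = ∑ k ∈ range K with e k < j, 2 ^ e k := by
  have hdvd : 2 ^ j ∣ ∑ k ∈ range K with ¬e k < j, 2 ^ e k :=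
    dvd_sum fun k hk ↦ pow_dvd_pow 2 (not_lt.1 (mem_filter.1 hk).2)
  obtain ⟨c, hc⟩ := hdvd
  rw [binarySum, ← sum_filter_add_sum_filter_not _ (fun k ↦ e k < j), hc,
    Nat.add_mul_mod_self_left, Nat.mod_eq_of_lt]
  exact sum_two_pow_lt he.injOn fun k hk ↦ (mem_filter.1 hk).2

lemma binarySum_mod_two_pow_of_le (he : StrictMono e) {R K j : ℕ} (hRK : R ≤ K)
    (hlow : ∀ k < R, e k < j) (hhigh : j ≤ e R) : binarySum e K % 2 ^ j = binarySum e R := by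
  rw [binarySum_mod_two_pow he.injective, binarySum]
  congr 1
  ext k
  simp only [mem_filter, mem_range]
  refine ⟨fun ⟨_, hk⟩ ↦ ?_, fun hk ↦ ⟨hk.trans_le hRK, hlow k hk⟩⟩
  by_contra! hRk
  exact (hhigh.trans (he.monotone hRk)).not_gt hk

lemma two_pow_le_binarySum_mod (he : e.Injective) {K k j : ℕ} (hk : k < K) (hj : e k < j) :
    2 ^ e k ≤ binarySum e K % 2 ^ j := by
  rw [binarySum_mod_two_pow he]
  exact single_le_sum (f := fun k ↦ 2 ^ e k) (fun _ _ ↦ Nat.zero_le _)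
    (mem_filter.2 ⟨mem_range.2 hk, hj⟩)

end BinarySum

lemma le_mod_add_mod_iff_mod_lt {S m q : ℕ} (hq : 0 < q) (hmS : m ≤ S) :
    q ≤ m % q + (S - m) % q ↔ S % q < m % q := by
  have hS : S % q = (m % q + (S - m) % q) % q := by
    rw [← Nat.add_mod, Nat.add_sub_cancel' hmS]
  have ha := Nat.mod_lt m hq
  have hb := Nat.mod_lt (S - m) hq
  rcases lt_or_ge (m % q + (S - m) % q) q with h | h
  · rw [Nat.mod_eq_of_lt h] at hS
    omega
  · have hlt : m % q + (S - m) % q - q < q := by omega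
    rw [Nat.mod_eq_sub_mod h, Nat.mod_eq_of_lt hlt] at hS
    omega

/-- Kummer's theorem, with a carry at position `j` read off as `S mod p^j < m mod p^j`. -/
lemma padicValNat_choose_eq_card_mod_lt_s9 {p : ℕ} [hp : Fact p.Prime] {S m b : ℕ} (hmS : m ≤ S)
    (hb : Nat.log p S < b) :
    padicValNat p (S.choose m) = #{j ∈ Ico 1 b | S % p ^ j < m % p ^ j} := by
  rw [padicValNat_choose hmS hb]
  congr 1
  exact filter_congr fun j _ ↦ le_mod_add_mod_iff_mod_lt (pow_pos hp.out.pos j) hmS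

section PadicBinomial

variable {p : ℕ} [hp : Fact p.Prime]

lemma pChoose_natCast (S m : ℕ) : pChoose p S m = S.choose m := by
  have hf : (m.factorial : ℚ_[p]) ≠ 0 := by exact_mod_cast m.factorial_ne_zero
  rw [pChoose, descPochhammer_eval_eq_descFactorial, Nat.descFactorial_eq_factorial_mul_choose,
    Nat.cast_mul, mul_div_cancel_left₀ _ hf]

lemma descPochhammer_eval_coe (g : ℤ_[p]) (m : ℕ) :
    (descPochhammer ℚ_[p] m).eval (g : ℚ_[p]) =
      ((descPochhammer ℤ_[p] m).eval g : ℤ_[p]) := by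
  have hg : (g : ℚ_[p]) = PadicInt.Coe.ringHom g := rfl
  rw [← descPochhammer_map PadicInt.Coe.ringHom, Polynomial.eval_map, hg,
    Polynomial.eval₂_at_apply]
  rfl

lemma norm_pChoose_sub_pChoose_mul_le (g h : ℤ_[p]) (m : ℕ) :
    ‖pChoose p g m - pChoose p h m‖ * ‖(m.factorial : ℚ_[p])‖ ≤ ‖g - h‖ := by
  obtain ⟨q, hq⟩ := Polynomial.sub_dvd_eval_sub g h (descPochhammer ℤ_[p] m)
  have hf : ‖(m.factorial : ℚ_[p])‖ ≠ 0 := by simp [m.factorial_ne_zero]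
  rw [pChoose, pChoose, div_sub_div_same, norm_div, div_mul_cancel₀ _ hf,
    descPochhammer_eval_coe, descPochhammer_eval_coe, ← PadicInt.coe_sub, hq,
    ← PadicInt.norm_def, norm_mul]
  exact mul_le_of_le_one_right (norm_nonneg _) (PadicInt.norm_le_one q)

lemma norm_pChoose_eq_of_norm_sub_lt {g h : ℤ_[p]} {m : ℕ}
    (hgh : ‖g - h‖ < ‖pChoose p h m‖ * ‖(m.factorial : ℚ_[p])‖) :
    ‖pChoose p g m‖ = ‖pChoose p h m‖ :=
  Padic.norm_eq_of_norm_sub_lt_right <| lt_of_mul_lt_mul_right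
    ((norm_pChoose_sub_pChoose_mul_le g h m).trans_lt hgh) (norm_nonneg _)

lemma norm_natCast_eq_zpow {n : ℕ} (hn : n ≠ 0) :
    ‖(n : ℚ_[p])‖ = (p : ℝ) ^ (-(padicValNat p n : ℤ)) := by
  rw [Padic.norm_eq_zpow_neg_valuation (by exact_mod_cast hn), Padic.valuation_natCast]

lemma ne_zero_and_valuation_eq_of_norm_eq {x : ℚ_[p]} {n : ℕ} (hn : n ≠ 0)
    (h : ‖x‖ = ‖(n : ℚ_[p])‖) : x ≠ 0 ∧ x.valuation = padicValNat p n := by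
  have hx : x ≠ 0 := by
    rintro rfl
    exact hn (by exact_mod_cast norm_eq_zero.1 (h.symm.trans norm_zero))
  refine ⟨hx, neg_injective (zpow_right_injective₀ (a := (p : ℝ)) ?_ ?_ ?_)⟩
  · exact_mod_cast hp.out.pos
  · exact_mod_cast hp.out.ne_one
  · change (p : ℝ) ^ (-x.valuation) = (p : ℝ) ^ (-(padicValNat p n : ℤ))
    rw [← Padic.norm_eq_zpow_neg_valuation hx, h, norm_natCast_eq_zpow hn]

lemma pChoose_ne_zero_and_valuation_eq {g : ℤ_[p]} {S m : ℕ} (hmS : m ≤ S)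
    (hgS : ‖g - S‖ < (p : ℝ) ^ (-(m + padicValNat p (S.choose m) : ℤ))) :
    pChoose p g m ≠ 0 ∧ (pChoose p g m).valuation = padicValNat p (S.choose m) := by
  have hN : S.choose m ≠ 0 := (Nat.choose_pos hmS).ne'
  have hp1 : (1 : ℝ) ≤ p := by exact_mod_cast hp.out.one_lt.le
  refine ne_zero_and_valuation_eq_of_norm_eq hN ?_
  have hS : pChoose p ((S : ℤ_[p]) : ℚ_[p]) m = (S.choose m : ℚ_[p]) := by
    rw [PadicInt.coe_natCast, pChoose_natCast]
  rw [← hS]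
  refine norm_pChoose_eq_of_norm_sub_lt (hgS.trans_le ?_)
  rw [hS, norm_natCast_eq_zpow hN, norm_natCast_eq_zpow m.factorial_ne_zero,
    ← zpow_add₀ (by positivity)]
  apply zpow_le_zpow_right₀ hp1
  have := padicValNat_factorial_le (p := p) m
  omega

end PadicBinomial

noncomputable def twoAdicOfDigits (e : ℕ → ℕ) : ℤ_[2] := ∑' k, 2 ^ e k

section TwoAdicOfDigits

variable {e : ℕ → ℕ}

lemma PadicInt.norm_two_pow (n : ℕ) : ‖(2 : ℤ_[2]) ^ n‖ = (2 : ℝ) ^ (-(n : ℤ)) := by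
  simpa using PadicInt.norm_p_pow (p := 2) n

lemma summable_two_pow (he : StrictMono e) : Summable fun k ↦ (2 : ℤ_[2]) ^ e k := by
  refine Summable.of_norm_bounded summable_geometric_two fun k ↦ ?_
  rw [PadicInt.norm_two_pow, zpow_neg, zpow_natCast, ← inv_pow, one_div]
  exact pow_le_pow_of_le_one (by norm_num) (by norm_num) he.le_apply

lemma twoAdicOfDigits_eq_binarySum_add (he : StrictMono e) (K : ℕ) :
    twoAdicOfDigits e = binarySum e K + 2 ^ e K * twoAdicOfDigits (fun k ↦ e (k + K) - e K) := by
  have hshift : StrictMono fun k ↦ e (k + K) - e K := fun a b hab ↦ by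
    have := he (Nat.add_lt_add_right hab K)
    have := he.monotone (Nat.le_add_left K a)
    simp only
    omega
  rw [twoAdicOfDigits, twoAdicOfDigits, ← (summable_two_pow hshift).tsum_mul_left,
    ← (summable_two_pow he).sum_add_tsum_nat_add K, binarySum]
  push_cast
  congr 1
  refine tsum_congr fun k ↦ ?_
  rw [← pow_add, Nat.add_sub_cancel' (he.monotone (Nat.le_add_left K k))]

lemma norm_twoAdicOfDigits_sub_binarySum_le (he : StrictMono e) (K : ℕ) :
    ‖twoAdicOfDigits e - binarySum e K‖ ≤ (2 : ℝ) ^ (-(e K : ℤ)) := by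
  rw [twoAdicOfDigits_eq_binarySum_add he K, add_sub_cancel_left, norm_mul, PadicInt.norm_two_pow]
  exact mul_le_of_le_one_right (by positivity) (PadicInt.norm_le_one _)

end TwoAdicOfDigits

section Carries

variable {e : ℕ → ℕ}

/-- The truncation `S = binarySum e (K + 1)` agrees with `γ` up to `2^{-e (K + 1)}`; a gap
`e (K + 1) - e K > m` makes this finer than `v(m!) + v(C(S, m))`, so Kummer's theorem for `S`
carries over to `γ`. -/
theorem exists_valuation_pChoose_twoAdicOfDigits_eq_card (he : StrictMono e)
    (hgap : ∀ M, ∀ᶠ k in atTop, M + e k < e (k + 1)) (m J : ℕ) :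
    ∃ K ≥ J, pChoose 2 (twoAdicOfDigits e) m ≠ 0 ∧
      (pChoose 2 (twoAdicOfDigits e) m).valuation =
        #{j ∈ Ico 1 (e K + 1) | binarySum e (K + 1) % 2 ^ j < m % 2 ^ j} := by
  obtain ⟨K, hgapK, hK⟩ := ((hgap m).and (eventually_ge_atTop (max J m))).exists
  set S := binarySum e (K + 1)
  have hS : 2 ^ e K ≤ S := two_pow_le_binarySum K.lt_succ_self
  have hmS : m ≤ S := calc
    m ≤ K := le_of_max_le_right hK
    _ ≤ e K := he.le_apply
    _ ≤ 2 ^ e K := Nat.lt_two_pow_self.le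
    _ ≤ S := hS
  have hlog : Nat.log 2 S < e K + 1 := by
    refine Nat.log_lt_of_lt_pow (by have := Nat.one_le_two_pow (n := e K); omega)
      (binarySum_lt_two_pow he.injective fun k hk ↦ ?_)
    exact Nat.lt_succ_of_le (he.monotone (Nat.le_of_lt_succ hk))
  have hval := padicValNat_choose_eq_card_mod_lt_s9 hmS hlog
  have hvK : padicValNat 2 (S.choose m) ≤ e K := by
    rw [hval]
    exact (card_filter_le _ _).trans (by simp)
  refine ⟨K, le_of_max_le_left hK, ?_⟩
  rw [← hval]
  refine pChoose_ne_zero_and_valuation_eq hmS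
    ((norm_twoAdicOfDigits_sub_binarySum_le he (K + 1)).trans_lt ?_)
  exact zpow_lt_zpow_right₀ one_lt_two (by omega)

variable (he : StrictMono e) (hgap : ∀ M, ∀ᶠ k in atTop, M + e k < e (k + 1))
include he hgap

lemma pChoose_twoAdicOfDigits_ne_zero (m : ℕ) : pChoose 2 (twoAdicOfDigits e) m ≠ 0 := by
  obtain ⟨K, -, hne, -⟩ := exists_valuation_pChoose_twoAdicOfDigits_eq_card he hgap m 0
  exact hne

lemma valuation_pChoose_twoAdicOfDigits_nonneg (m : ℕ) :
    0 ≤ (pChoose 2 (twoAdicOfDigits e) m).valuation := by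
  obtain ⟨K, -, -, hval⟩ := exists_valuation_pChoose_twoAdicOfDigits_eq_card he hgap m 0
  exact hval ▸ Int.natCast_nonneg _

/-- Every position `j ∈ (t, e R]` is a carry: there `γ mod 2^j` is the truncation below `m`. -/
lemma sub_le_valuation_pChoose_twoAdicOfDigits {R t m : ℕ} (hlow : ∀ k < R, e k ≤ t)
    (hR : binarySum e R < m) (hm : m < 2 ^ (t + 1)) :
    (e R : ℤ) - t ≤ (pChoose 2 (twoAdicOfDigits e) m).valuation := by
  obtain ⟨K, hRK, -, hval⟩ := exists_valuation_pChoose_twoAdicOfDigits_eq_card he hgap m R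
  have hsub : Ico (t + 1) (e R + 1) ⊆
      {j ∈ Ico 1 (e K + 1) | binarySum e (K + 1) % 2 ^ j < m % 2 ^ j} := by
    intro j hj
    rw [mem_Ico] at hj
    have heRK := he.monotone hRK
    rw [mem_filter, mem_Ico,
      binarySum_mod_two_pow_of_le he (R := R) (K := K + 1) (j := j) (by omega)
      (fun k hk ↦ by have := hlow k hk; omega) (by omega),
      Nat.mod_eq_of_lt (hm.trans_le (Nat.pow_le_pow_right two_pos (by omega : t + 1 ≤ j)))]
    exact ⟨⟨by omega, by omega⟩, hR⟩
  have := card_le_card hsub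
  rw [Nat.card_Ico] at this
  omega

/-- No position `j ∉ (τ, e R]` is a carry of `2^τ`: below `τ` the digits of `2^τ` vanish, and
above `e R` the digit `2^(e R)` of `γ` dominates `2^τ`. -/
lemma valuation_pChoose_twoAdicOfDigits_two_pow_le {R τ : ℕ} (hτ : τ ≤ e R) :
    (pChoose 2 (twoAdicOfDigits e) (2 ^ τ)).valuation ≤ (e R : ℤ) - τ := by
  obtain ⟨K, hRK, -, hval⟩ :=
    exists_valuation_pChoose_twoAdicOfDigits_eq_card he hgap (2 ^ τ) R
  have hsub : {j ∈ Ico 1 (e K + 1) | binarySum e (K + 1) % 2 ^ j < 2 ^ τ % 2 ^ j} ⊆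
      Ico (τ + 1) (e R + 1) := by
    intro j hj
    rw [mem_filter] at hj
    rw [mem_Ico]
    constructor
    · by_contra! hjτ
      rw [Nat.mod_eq_zero_of_dvd (pow_dvd_pow 2 (by omega))] at hj
      omega
    · by_contra! hRj
      have h1 := two_pow_le_binarySum_mod he.injective (K := K + 1) (by omega) hRj
      have h2 : 2 ^ τ ≤ 2 ^ e R := Nat.pow_le_pow_right two_pos hτ
      exact hj.2.not_ge (((Nat.mod_le _ _).trans h2).trans h1)
  have := card_le_card hsub
  rw [Nat.card_Ico] at this
  omega

end Carries

section GapSequence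

noncomputable def gapSeq (β : ℝ) : ℕ → ℕ
  | 0 => 0
  | i + 1 => gapSeq β i + ⌈β * 2 ^ gapSeq β i⌉₊

variable {β : ℝ}

lemma mul_two_pow_gapSeq_le_sub (i : ℕ) :
    β * 2 ^ gapSeq β i ≤ (gapSeq β (i + 1) : ℝ) - gapSeq β i := by
  rw [gapSeq, Nat.cast_add, add_sub_cancel_left]
  exact Nat.le_ceil _

lemma gapSeq_sub_lt (hβ : 0 < β) (i : ℕ) :
    (gapSeq β (i + 1) : ℝ) - gapSeq β i < β * 2 ^ gapSeq β i + 1 := by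
  rw [gapSeq, Nat.cast_add, add_sub_cancel_left]
  exact Nat.ceil_lt_add_one (by positivity)

lemma gapSeq_strictMono (hβ : 0 < β) : StrictMono (gapSeq β) :=
  strictMono_nat_of_lt_succ fun i ↦ Nat.lt_add_of_pos_right (Nat.ceil_pos.2 (by positivity))

lemma eventually_add_gapSeq_lt (hβ : 0 < β) (M : ℕ) :
    ∀ᶠ i in atTop, M + gapSeq β i < gapSeq β (i + 1) := by
  have hlim : Tendsto (fun i : ℕ ↦ β * 2 ^ i) atTop atTop :=
    (tendsto_pow_atTop_atTop_of_one_lt one_lt_two).const_mul_atTop hβ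
  filter_upwards [hlim.eventually_gt_atTop (M : ℝ)] with i hi
  have hmono : β * 2 ^ i ≤ β * 2 ^ gapSeq β i :=
    mul_le_mul_of_nonneg_left
      (pow_le_pow_right₀ one_le_two (gapSeq_strictMono hβ).le_apply) hβ.le
  have := mul_two_pow_gapSeq_le_sub (β := β) i
  exact_mod_cast (by linarith : (M : ℝ) + gapSeq β i < gapSeq β (i + 1))

lemma eventually_mul_two_pow_gapSeq_le (hβ : 0 < β) {ε : ℝ} (hε : 0 < ε) :
    ∀ᶠ i in atTop, β * 2 ^ gapSeq β i ≤ ε * 2 ^ gapSeq β (i + 1) := by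
  obtain ⟨M, hM⟩ := pow_unbounded_of_one_lt (β / ε) one_lt_two
  filter_upwards [eventually_add_gapSeq_lt hβ M] with i hi
  calc β * 2 ^ gapSeq β i ≤ ε * 2 ^ M * 2 ^ gapSeq β i := by
        gcongr
        exact ((div_lt_iff₀' hε).1 hM).le
    _ = ε * 2 ^ (M + gapSeq β i) := by ring
    _ ≤ ε * 2 ^ gapSeq β (i + 1) := by gcongr; exact one_le_two

end GapSequence

section ParityDigits

noncomputable def parityDigits (β : ℝ) (i k : ℕ) : ℕ := gapSeq β (2 * k + i % 2)

noncomputable def parityGamma (β : ℝ) (i : ℕ) : ℤ_[2] := twoAdicOfDigits (parityDigits β i)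

variable {β : ℝ}

lemma parityDigits_add_two (i : ℕ) : parityDigits β (i + 2) = parityDigits β i := by
  funext k
  simp only [parityDigits, Nat.add_mod_right]

lemma parityGamma_add_two (i : ℕ) : parityGamma β (i + 2) = parityGamma β i := by
  rw [parityGamma, parityGamma, parityDigits_add_two]

lemma parityDigits_half (i : ℕ) : parityDigits β i (i / 2) = gapSeq β i := by
  rw [parityDigits, Nat.div_add_mod]

lemma parityDigits_lt (hβ : 0 < β) {i k : ℕ} (hk : k < (i + 1) / 2) :
    parityDigits β (i + 1) k < gapSeq β i :=
  gapSeq_strictMono hβ (by omega)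

lemma parityDigits_strictMono (hβ : 0 < β) (i : ℕ) : StrictMono (parityDigits β i) :=
  fun _ _ h ↦ gapSeq_strictMono hβ (by omega)

lemma eventually_add_parityDigits_lt (hβ : 0 < β) (i M : ℕ) :
    ∀ᶠ k in atTop, M + parityDigits β i k < parityDigits β i (k + 1) := by
  obtain ⟨j₀, hj₀⟩ := eventually_atTop.1 (eventually_add_gapSeq_lt hβ M)
  filter_upwards [eventually_ge_atTop j₀] with k hk
  have := hj₀ (2 * k + i % 2) (by omega)
  have := (gapSeq_strictMono hβ).monotone (by omega : 2 * k + i % 2 + 1 ≤ 2 * (k + 1) + i % 2)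
  rw [parityDigits, parityDigits]
  omega

end ParityDigits

lemma StrictMono.exists_le_lt {t : ℕ → ℕ} (ht : StrictMono t) {m : ℕ} (hm : t 0 ≤ m) :
    ∃ i, t i ≤ m ∧ m < t (i + 1) := by
  obtain ⟨i, hi, hi'⟩ :=
    ht.exists_between_of_tendsto_atTop ht.tendsto_atTop (Nat.lt_succ_of_le hm)
  exact ⟨i, Nat.le_of_lt_succ hi, hi'⟩

section ParityValuations

variable {β : ℝ} (hβ : 0 < β)
include hβ

lemma pChoose_parityGamma_ne_zero (i m : ℕ) : pChoose 2 (parityGamma β i) m ≠ 0 :=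
  pChoose_twoAdicOfDigits_ne_zero (parityDigits_strictMono hβ i)
    (eventually_add_parityDigits_lt hβ i) m

lemma valuation_pChoose_parityGamma_nonneg (i m : ℕ) :
    0 ≤ (pChoose 2 (parityGamma β i) m).valuation :=
  valuation_pChoose_twoAdicOfDigits_nonneg (parityDigits_strictMono hβ i)
    (eventually_add_parityDigits_lt hβ i) m

lemma valuation_pChoose_parityGamma_mul (i m : ℕ) :
    (pChoose 2 (parityGamma β 0) m * pChoose 2 (parityGamma β 1) m).valuation =
      (pChoose 2 (parityGamma β i) m).valuation +
        (pChoose 2 (parityGamma β (i + 1)) m).valuation := by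
  rw [Padic.valuation_mul (pChoose_parityGamma_ne_zero hβ 0 m)
    (pChoose_parityGamma_ne_zero hβ 1 m)]
  induction i with
  | zero => rfl
  | succ i ih => rw [ih, parityGamma_add_two, add_comm]

lemma valuation_pChoose_parityGamma_two_pow_le (i : ℕ) :
    (pChoose 2 (parityGamma β i) (2 ^ gapSeq β i)).valuation +
        (pChoose 2 (parityGamma β (i + 1)) (2 ^ gapSeq β i)).valuation ≤
      (gapSeq β (i + 1) : ℤ) - gapSeq β i := by
  have hown := valuation_pChoose_twoAdicOfDigits_two_pow_le (parityDigits_strictMono hβ i)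
    (eventually_add_parityDigits_lt hβ i) (R := i / 2) (parityDigits_half i).ge
  have hnext := valuation_pChoose_twoAdicOfDigits_two_pow_le (parityDigits_strictMono hβ (i + 1))
    (eventually_add_parityDigits_lt hβ (i + 1)) (R := (i + 1) / 2)
    ((parityDigits_half (i + 1)).symm ▸ (gapSeq_strictMono hβ).monotone i.le_succ)
  rw [parityDigits_half] at hown hnext
  rw [parityGamma, parityGamma]
  linarith

/-- All positions from `n_{i+2}` up to the next digit `n_{i+3}` of `parityGamma β (i + 1)` are
carries. -/
lemma mul_le_valuation_pChoose_parityGamma_of_binarySum_lt {i m : ℕ}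
    (hm : m < 2 ^ gapSeq β (i + 2))
    (hsum : binarySum (parityDigits β (i + 1)) ((i + 1) / 2 + 1) < m) :
    β * m ≤ (pChoose 2 (parityGamma β (i + 1)) m).valuation := by
  have hlow : ∀ k < (i + 1) / 2 + 1, parityDigits β (i + 1) k ≤ gapSeq β (i + 2) := by
    intro k hk
    rw [← parityDigits_add_two]
    exact (parityDigits_lt hβ (by omega)).le
  have hcarries := sub_le_valuation_pChoose_twoAdicOfDigits (parityDigits_strictMono hβ (i + 1))
    (eventually_add_parityDigits_lt hβ (i + 1)) hlow hsum
    (hm.trans (Nat.pow_lt_pow_succ one_lt_two))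
  have hnext : parityDigits β (i + 1) ((i + 1) / 2 + 1) = gapSeq β (i + 3) := by
    rw [← parityDigits_add_two, show (i + 1) / 2 + 1 = (i + 3) / 2 by omega, parityDigits_half]
  rw [hnext] at hcarries
  have hcarries' : (gapSeq β (i + 3) : ℝ) - gapSeq β (i + 2) ≤
      (pChoose 2 (parityGamma β (i + 1)) m).valuation := by exact_mod_cast hcarries
  have hm' : (m : ℝ) ≤ 2 ^ gapSeq β (i + 2) := by exact_mod_cast hm.le
  nlinarith [mul_two_pow_gapSeq_le_sub (β := β) (i + 2)]

/-- Here `m < 2^(n_i) + 2^(n_{i+1})`, and the carries of `parityGamma β (i + 2)` between `n_{i+1}`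
and its digit `n_{i+2}` number at least `β 2^(n_{i+1})`. -/
lemma mul_sub_le_valuation_pChoose_parityGamma_of_le_binarySum {i m : ℕ}
    (hm : 2 ^ gapSeq β (i + 1) ≤ m)
    (hsum : m ≤ binarySum (parityDigits β (i + 1)) ((i + 1) / 2 + 1)) :
    β * (m - 2 ^ gapSeq β i) ≤ (pChoose 2 (parityGamma β (i + 2)) m).valuation := by
  have hlow : binarySum (parityDigits β (i + 1)) ((i + 1) / 2) < 2 ^ gapSeq β i :=
    binarySum_lt_two_pow (parityDigits_strictMono hβ _).injective
      fun k hk ↦ parityDigits_lt hβ hk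
  rw [binarySum_succ, parityDigits_half] at hsum
  have hm_lt : m < 2 ^ gapSeq β i + 2 ^ gapSeq β (i + 1) := by omega
  have hm_lt' : m < 2 ^ (gapSeq β (i + 1) + 1) := by
    have := Nat.pow_lt_pow_right one_lt_two ((gapSeq_strictMono hβ) (Nat.lt_add_one i))
    rw [pow_succ]
    omega
  have hcarries := sub_le_valuation_pChoose_twoAdicOfDigits (parityDigits_strictMono hβ (i + 2))
    (eventually_add_parityDigits_lt hβ (i + 2)) (R := (i + 2) / 2)
    (fun k hk ↦ (parityDigits_lt hβ hk).le)
    ((binarySum_lt_two_pow (parityDigits_strictMono hβ _).injective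
      fun k hk ↦ parityDigits_lt hβ hk).trans_le hm) hm_lt'
  rw [parityDigits_half] at hcarries
  have hcarries' : (gapSeq β (i + 2) : ℝ) - gapSeq β (i + 1) ≤
      (pChoose 2 (parityGamma β (i + 2)) m).valuation := by exact_mod_cast hcarries
  have hm_lt'' : (m : ℝ) < 2 ^ gapSeq β i + 2 ^ gapSeq β (i + 1) := by exact_mod_cast hm_lt
  nlinarith [mul_two_pow_gapSeq_le_sub (β := β) (i + 1)]

lemma mul_sub_le_valuation_pChoose_parityGamma {i m : ℕ} (hm₁ : 2 ^ gapSeq β (i + 1) ≤ m)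
    (hm₂ : m < 2 ^ gapSeq β (i + 2)) :
    β * (m - 2 ^ gapSeq β i) ≤
      (((pChoose 2 (parityGamma β (i + 1)) m).valuation +
        (pChoose 2 (parityGamma β (i + 2)) m).valuation : ℤ) : ℝ) := by
  have hv₁ : (0 : ℝ) ≤ (pChoose 2 (parityGamma β (i + 1)) m).valuation := by
    exact_mod_cast valuation_pChoose_parityGamma_nonneg hβ (i + 1) m
  have hv₂ : (0 : ℝ) ≤ (pChoose 2 (parityGamma β (i + 2)) m).valuation := by
    exact_mod_cast valuation_pChoose_parityGamma_nonneg hβ (i + 2) m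
  push_cast
  rcases lt_or_ge (binarySum (parityDigits β (i + 1)) ((i + 1) / 2 + 1)) m with hsum | hsum
  · have := mul_le_valuation_pChoose_parityGamma_of_binarySum_lt hβ hm₂ hsum
    nlinarith [pow_pos (two_pos (α := ℝ)) (gapSeq β i)]
  · linarith [mul_sub_le_valuation_pChoose_parityGamma_of_le_binarySum hβ hm₁ hsum]

lemma frequently_valuation_pChoose_parityGamma_div_le {ε : ℝ} (hε : 0 < ε) :
    ∃ᶠ m : ℕ in atTop,
      ((pChoose 2 (parityGamma β 0) m * pChoose 2 (parityGamma β 1) m).valuation : ℝ) / m ≤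
        β + ε := by
  have hlim : Tendsto (fun i ↦ 2 ^ gapSeq β i) atTop atTop :=
    (tendsto_pow_atTop_atTop_of_one_lt one_lt_two).comp (gapSeq_strictMono hβ).tendsto_atTop
  refine hlim.frequently (Eventually.frequently ?_)
  have hsmall : Tendsto (fun i ↦ ((2 : ℝ) ^ gapSeq β i)⁻¹) atTop (nhds 0) :=
    tendsto_inv_atTop_zero.comp ((tendsto_pow_atTop_atTop_of_one_lt one_lt_two).comp
      (gapSeq_strictMono hβ).tendsto_atTop)
  filter_upwards [hsmall.eventually (gt_mem_nhds hε)] with i hi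
  have hpos : (0 : ℝ) < 2 ^ gapSeq β i := by positivity
  have hval : ((pChoose 2 (parityGamma β 0) (2 ^ gapSeq β i) *
      pChoose 2 (parityGamma β 1) (2 ^ gapSeq β i)).valuation : ℝ) ≤
      (gapSeq β (i + 1) : ℝ) - gapSeq β i := by
    rw [valuation_pChoose_parityGamma_mul hβ i]
    exact_mod_cast valuation_pChoose_parityGamma_two_pow_le hβ i
  have hgap := gapSeq_sub_lt hβ i
  push_cast
  rw [div_le_iff₀ hpos]
  have : 1 ≤ ε * 2 ^ gapSeq β i := by
    rw [inv_lt_iff_one_lt_mul₀ hpos] at hi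
    linarith
  nlinarith

lemma eventually_le_valuation_pChoose_parityGamma_div {ε : ℝ} (hε : 0 < ε) :
    ∀ᶠ m : ℕ in atTop, β - ε ≤
      ((pChoose 2 (parityGamma β 0) m * pChoose 2 (parityGamma β 1) m).valuation : ℝ) / m := by
  obtain ⟨I, hI⟩ := eventually_atTop.1 (eventually_mul_two_pow_gapSeq_le hβ hε)
  filter_upwards [eventually_ge_atTop (2 ^ gapSeq β (I + 1))] with m hm
  have hshift : StrictMono fun j ↦ 2 ^ gapSeq β (j + I + 1) :=
    (pow_right_strictMono₀ one_lt_two).comp ((gapSeq_strictMono hβ).comp fun a b h ↦ by omega)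
  obtain ⟨j, hj₁, hj₂⟩ := hshift.exists_le_lt (m := m) (by simpa using hm)
  have hlow := mul_sub_le_valuation_pChoose_parityGamma hβ (i := j + I) hj₁
    (by simpa [add_right_comm] using hj₂)
  have hε' := hI (j + I) (by omega)
  rw [← valuation_pChoose_parityGamma_mul hβ (j + I + 1)] at hlow
  have hm₁ : (2 : ℝ) ^ gapSeq β (j + I + 1) ≤ m := by exact_mod_cast hj₁
  have hmpos : (0 : ℝ) < m := lt_of_lt_of_le (by positivity) hm₁
  rw [le_div_iff₀ hmpos]
  nlinarith

end ParityValuations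

lemma isCoboundedUnder_ge_of_frequently_le {ι α : Type*} [Preorder α] {l : Filter ι}
    {f : ι → α} {x : α} (h : ∃ᶠ i in l, f i ≤ x) : IsCoboundedUnder (· ≥ ·) l f :=
  ⟨x, fun a ha ↦ by
    obtain ⟨i, hix, hai⟩ := (h.and_eventually (eventually_map.1 ha)).exists
    exact hai.trans hix⟩

lemma liminf_eq_of_frequently_le_of_eventually_le {u : ℕ → ℝ} {b : ℝ}
    (hfreq : ∀ ε > 0, ∃ᶠ n in atTop, u n ≤ b + ε)
    (hev : ∀ ε > 0, ∀ᶠ n in atTop, b - ε ≤ u n) :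
    liminf u atTop = b := by
  have hbdd : IsBoundedUnder (· ≥ ·) atTop u := ⟨b - 1, eventually_map.2 (hev 1 one_pos)⟩
  have hcobdd := isCoboundedUnder_ge_of_frequently_le (hfreq 1 one_pos)
  refine le_antisymm (le_of_forall_pos_le_add fun ε hε ↦ ?_)
    (le_of_forall_sub_le fun ε hε ↦ ?_)
  · exact liminf_le_of_frequently_le (hfreq ε hε) hbdd
  · exact le_liminf_of_le hcobdd (hev ε hε)

/-- For every `β > 0` there are `γ₁, γ₂ ∈ ℤ₂` with `C(γ₁,m)C(γ₂,m) ≠ 0` for all `m` and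
`liminf_m v₂(C(γ₁,m)C(γ₂,m))/m = β`. -/
theorem stmt_9 (β : ℝ) (hβ : 0 < β) :
    ∃ γ₁ γ₂ : ℤ_[2],
      (∀ m : ℕ, pChoose 2 (γ₁ : ℚ_[2]) m * pChoose 2 (γ₂ : ℚ_[2]) m ≠ 0) ∧
      Filter.liminf (fun m : ℕ =>
          (((pChoose 2 (γ₁ : ℚ_[2]) m * pChoose 2 (γ₂ : ℚ_[2]) m).valuation : ℝ) / m))
        Filter.atTop = β :=
  ⟨parityGamma β 0, parityGamma β 1,
    fun m ↦ mul_ne_zero (pChoose_parityGamma_ne_zero hβ 0 m)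
      (pChoose_parityGamma_ne_zero hβ 1 m),
    liminf_eq_of_frequently_le_of_eventually_le
      (fun _ ↦ frequently_valuation_pChoose_parityGamma_div_le hβ)
      (fun _ ↦ eventually_le_valuation_pChoose_parityGamma_div hβ)⟩
end
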